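/- Let 1 < p < ∞ and let (Ω,μ) be a measure space. For every measurable function f on Ω, ‖f‖^#_{L(p,∞)} = ‖f‖^{##}_{L(p,∞)}; that is, sup_{s>0} s^{1/p}( f**(s) − f*(s) ) = sup_{t>0} (λ_f(t))^{−(1−1/p)} ∫_t^∞ λ_f(s) ds. -/

import Mathlib

open MeasureTheory Set
open scoped ENNReal NNReal

noncomputable section

/-- The distribution function `λ_f(t) = μ {x : |f(x)| > t}`. -/
def distFun {α : Type*} [MeasurableSpace α] (μ : Measure α) (f : α → ℝ) (t : ℝ) : ℝ≥0∞ :=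
  μ {x | t < |f x|}

/-- The non-increasing rearrangement `f*(t) = inf {s > 0 : λ_f(s) ≤ t}`. -/
def rearr {α : Type*} [MeasurableSpace α] (μ : Measure α) (f : α → ℝ) (t : ℝ) : ℝ≥0∞ :=
  sInf (ENNReal.ofReal '' {s : ℝ | 0 < s ∧ distFun μ f s ≤ ENNReal.ofReal t})

/-- The maximal function `f**(t) = (1/t) ∫₀ᵗ f*(s) ds`. -/
def dstar {α : Type*} [MeasurableSpace α] (μ : Measure α) (f : α → ℝ) (t : ℝ) : ℝ≥0∞ :=
  (∫⁻ s in Set.Ioc (0 : ℝ) t, rearr μ f s) / ENNReal.ofReal t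

/-- The `L(∞,∞)` "norm" : `sup_{t>0} (f**(t) - f*(t))`. -/
def oscNorm {α : Type*} [MeasurableSpace α] (μ : Measure α) (f : α → ℝ) : ℝ≥0∞ :=
  ⨆ (t : ℝ) (_ : 0 < t), dstar μ f t - rearr μ f t

/-- The Marcinkiewicz `L(p,∞)` quasinorm `‖f‖*_{L(p,∞)} = sup_{t>0} t (λ_f(t))^{1/p}`. -/
def wkNorm {α : Type*} [MeasurableSpace α] (μ : Measure α) (p : ℝ) (f : α → ℝ) : ℝ≥0∞ :=
  ⨆ (t : ℝ) (_ : 0 < t), ENNReal.ofReal t * distFun μ f t ^ (1 / p)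

/-- `‖f‖_{L(p,∞)} = sup_{s>0} s^{1/p} f**(s)`. -/
def wkNormStarStar {α : Type*} [MeasurableSpace α] (μ : Measure α) (p : ℝ) (f : α → ℝ) : ℝ≥0∞ :=
  ⨆ (s : ℝ) (_ : 0 < s), ENNReal.ofReal s ^ (1 / p) * dstar μ f s

/-- `‖f‖*_{L(p,∞)} = sup_{s>0} s^{1/p} f*(s)` (rearrangement form). -/
def wkNormStar {α : Type*} [MeasurableSpace α] (μ : Measure α) (p : ℝ) (f : α → ℝ) : ℝ≥0∞ :=
  ⨆ (s : ℝ) (_ : 0 < s), ENNReal.ofReal s ^ (1 / p) * rearr μ f s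

/-- `‖f‖^#_{L(p,∞)} = sup_{s>0} s^{1/p} (f**(s) - f*(s))`. -/
def sharpNorm {α : Type*} [MeasurableSpace α] (μ : Measure α) (p : ℝ) (f : α → ℝ) : ℝ≥0∞ :=
  ⨆ (s : ℝ) (_ : 0 < s), ENNReal.ofReal s ^ (1 / p) * (dstar μ f s - rearr μ f s)

/-- `‖f‖^{##}_{L(p,∞)} = sup_{t>0} (λ_f(t))^{-(1-1/p)} ∫_t^∞ λ_f(s) ds`. -/
def sharpSharpNorm {α : Type*} [MeasurableSpace α] (μ : Measure α) (p : ℝ) (f : α → ℝ) : ℝ≥0∞ :=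
  ⨆ (t : ℝ) (_ : 0 < t),
    distFun μ f t ^ (-(1 - 1 / p)) * ∫⁻ s in Set.Ioi t, distFun μ f s

/-- `‖f‖^{##}_{L(∞,∞)} = inf {C : ∫_t^∞ λ_f(s) ds ≤ C λ_f(t) for all t > 0}`. -/
def sharpSharpInf {α : Type*} [MeasurableSpace α] (μ : Measure α) (f : α → ℝ) : ℝ≥0∞ :=
  sInf {C : ℝ≥0∞ | ∀ t : ℝ, 0 < t →
    ∫⁻ s in Set.Ioi t, distFun μ f s ≤ C * distFun μ f t}

/-- O'Neil's quantity `inf {C^{1/p} : ∫_t^∞ λ_f(s) ds ≤ C t^{1-p} for all t > 0}`. -/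
def oneilQuantity {α : Type*} [MeasurableSpace α] (μ : Measure α) (p : ℝ) (f : α → ℝ) : ℝ≥0∞ :=
  sInf {D : ℝ≥0∞ | ∃ C : ℝ≥0∞, D = C ^ (1 / p) ∧
    ∀ t : ℝ, 0 < t → ∫⁻ s in Set.Ioi t, distFun μ f s ≤ C * ENNReal.ofReal t ^ (1 - p)}

/-- A cube in `ℝⁿ` with sides parallel to the coordinate axes. -/
def IsCube {n : ℕ} (Q : Set (Fin n → ℝ)) : Prop :=
  ∃ (a : Fin n → ℝ) (l : ℝ), 0 < l ∧ Q = Set.univ.pi fun i => Set.Icc (a i) (a i + l)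

/-- A countable family of subcubes of `Q₀` with pairwise disjoint interiors. -/
def IsPackingIn {n : ℕ} (Q₀ : Set (Fin n → ℝ)) (Q : ℕ → Set (Fin n → ℝ)) : Prop :=
  (∀ i, IsCube (Q i) ∧ Q i ⊆ Q₀) ∧
    Pairwise fun i j => interior (Q i) ∩ interior (Q j) = ∅

/-- The average `f_Q = (1/|Q|) ∫_Q f`. -/
def cubeAvg {n : ℕ} (f : (Fin n → ℝ) → ℝ) (Q : Set (Fin n → ℝ)) : ℝ :=
  ⨍ x in Q, f x

/-- The mean oscillation `(1/|Q|) ∫_Q |f - f_Q|`. -/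
def meanOsc {n : ℕ} (f : (Fin n → ℝ) → ℝ) (Q : Set (Fin n → ℝ)) : ℝ :=
  ⨍ x in Q, |f x - cubeAvg f Q|

/-- The John–Nirenberg functional `JN_p(f,Q₀)`. -/
def JN {n : ℕ} (p : ℝ) (f : (Fin n → ℝ) → ℝ) (Q₀ : Set (Fin n → ℝ)) : ℝ≥0∞ :=
  ⨆ (Q : ℕ → Set (Fin n → ℝ)) (_ : IsPackingIn Q₀ Q),
    (∑' i, volume (Q i) * ENNReal.ofReal (meanOsc f (Q i)) ^ p) ^ (1 / p)

/-- The BMO norm `‖f‖_{BMO(Q₀)}`. -/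
def bmoNorm {n : ℕ} (f : (Fin n → ℝ) → ℝ) (Q₀ : Set (Fin n → ℝ)) : ℝ≥0∞ :=
  ⨆ (Q : Set (Fin n → ℝ)) (_ : IsCube Q ∧ Q ⊆ Q₀), ENNReal.ofReal (meanOsc f Q)

/-- The Garsia–Rodemich functional `GaRo_p(f,Q₀)`: the least constant `C` such that
for every packing `{Qᵢ}` of `Q₀`,
`Σᵢ (1/|Qᵢ|) ∫_{Qᵢ}∫_{Qᵢ} |f(x)-f(y)| dx dy ≤ C (Σᵢ |Qᵢ|)^{1/p'}` where `1/p' = 1 - 1/p`. -/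
def GaRo {n : ℕ} (p : ℝ) (f : (Fin n → ℝ) → ℝ) (Q₀ : Set (Fin n → ℝ)) : ℝ≥0∞ :=
  sInf {C : ℝ≥0∞ | ∀ Q : ℕ → Set (Fin n → ℝ), IsPackingIn Q₀ Q →
    (∑' i, (volume (Q i))⁻¹ *
        ∫⁻ x in Q i, ∫⁻ y in Q i, ENNReal.ofReal |f x - f y|) ≤
      C * (∑' i, volume (Q i)) ^ (1 - 1 / p)}

/-!
Since `λ_f` is right continuous, `f*(u) > v ↔ λ_f(v) > u` for `v > 0`. Computing the area of
`{(u, v) : 0 < u ≤ t, f*(t) < v < f*(u)}` by vertical and by horizontal slices therefore gives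
`t (f**(t) - f*(t)) = ∫_{f*(t)}^∞ λ_f`, so the `s`-th term of `‖f‖^#` equals
`s^{1/p - 1} ∫_{f*(s)}^∞ λ_f`. The two suprema are then compared term by term, using that
`x ↦ x^{1/p - 1}` is decreasing: the level `s = λ_f(t)` satisfies `f*(s) ≤ t`, and every `t > f*(s)`
satisfies `λ_f(t) ≤ s`, so that `∫_{f*(s)}^∞ λ_f` is approximated by `∫_t^∞ λ_f` as `t ↓ f*(s)`.
-/

theorem ENNReal.rpow_le_rpow_of_nonpos {x y : ℝ≥0∞} {z : ℝ} (hxy : x ≤ y) (hz : z ≤ 0) :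
    y ^ z ≤ x ^ z := by
  simpa only [ENNReal.rpow_neg, neg_neg, inv_inv] using
    ENNReal.inv_le_inv.2 (ENNReal.rpow_le_rpow hxy (neg_nonneg.2 hz))

lemma volume_preimage_ofReal_Ioo {a c : ℝ≥0∞} (hc : c ≠ ∞) :
    volume (ENNReal.ofReal ⁻¹' Ioo c a) = a - c := by
  obtain ⟨r, hr, rfl⟩ : ∃ r, 0 ≤ r ∧ ENNReal.ofReal r = c :=
    ⟨c.toReal, ENNReal.toReal_nonneg, ENNReal.ofReal_toReal hc⟩
  rcases eq_or_ne a ∞ with rfl | ha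
  · have : ENNReal.ofReal ⁻¹' Ioo (ENNReal.ofReal r) ∞ = Ioi r := by
      ext v
      simp only [mem_preimage, mem_Ioo, ENNReal.ofReal_lt_ofReal_iff', ENNReal.ofReal_lt_top,
        and_true, mem_Ioi]
      exact ⟨And.left, fun h => ⟨h, hr.trans_lt h⟩⟩
    simp [this]
  · obtain ⟨s, hs, rfl⟩ : ∃ s, 0 ≤ s ∧ ENNReal.ofReal s = a :=
      ⟨a.toReal, ENNReal.toReal_nonneg, ENNReal.ofReal_toReal ha⟩
    have : ENNReal.ofReal ⁻¹' Ioo (ENNReal.ofReal r) (ENNReal.ofReal s) = Ioo r s := by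
      ext v
      simp only [mem_preimage, mem_Ioo, ENNReal.ofReal_lt_ofReal_iff']
      constructor
      · rintro ⟨⟨hrv, -⟩, hvs, -⟩
        exact ⟨hrv, hvs⟩
      · rintro ⟨hrv, hvs⟩
        exact ⟨⟨hrv, hr.trans_lt hrv⟩, hvs, (hr.trans_lt hrv).trans hvs⟩
    rw [this, Real.volume_Ioo, ENNReal.ofReal_sub _ hr]

lemma iUnion_Ioi_add_inv_nat_succ (a : ℝ) : ⋃ n : ℕ, Ioi (a + ((n : ℝ) + 1)⁻¹) = Ioi a := by
  refine Subset.antisymm (iUnion_subset fun n => Ioi_subset_Ioi ?_) fun v hv => ?_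
  · have : (0 : ℝ) < ((n : ℝ) + 1)⁻¹ := by positivity
    linarith
  · obtain ⟨n, hn⟩ := exists_nat_one_div_lt (sub_pos.2 (mem_Ioi.1 hv))
    exact mem_iUnion.2 ⟨n, by rw [one_div] at hn; simp only [mem_Ioi]; linarith⟩

lemma measure_preimage_Ioi_eq_iSup {X : Type*} [MeasurableSpace X] (ν : Measure X) (φ : X → ℝ)
    (a : ℝ) : ν (φ ⁻¹' Ioi a) = ⨆ (u : ℝ) (_ : a < u), ν (φ ⁻¹' Ioi u) := by
  refine le_antisymm ?_ (iSup₂_le fun u hu => measure_mono (preimage_mono (Ioi_subset_Ioi hu.le)))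
  have hmono : Monotone fun n : ℕ => φ ⁻¹' Ioi (a + ((n : ℝ) + 1)⁻¹) := fun m n hmn =>
    preimage_mono (Ioi_subset_Ioi (by gcongr))
  rw [← iUnion_Ioi_add_inv_nat_succ, preimage_iUnion, hmono.measure_iUnion]
  refine iSup_le fun n => le_iSup₂_of_le (a + ((n : ℝ) + 1)⁻¹) ?_ le_rfl
  have : (0 : ℝ) < ((n : ℝ) + 1)⁻¹ := by positivity
  linarith

lemma setLIntegral_Ioi_eq_iSup (g : ℝ → ℝ≥0∞) (a : ℝ) :
    ∫⁻ v in Ioi a, g v = ⨆ (u : ℝ) (_ : a < u), ∫⁻ v in Ioi u, g v := by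
  simp only [← withDensity_apply g measurableSet_Ioi]
  exact measure_preimage_Ioi_eq_iSup _ id a

section Rearrangement

variable {α : Type*} [MeasurableSpace α] (μ : Measure α) (f : α → ℝ)

lemma distFun_antitone : Antitone (distFun μ f) := fun _ _ h =>
  measure_mono fun _ hx => h.trans_lt hx

lemma exists_lt_distFun_of_lt {x : ℝ≥0∞} {v : ℝ} (h : x < distFun μ f v) :
    ∃ w, v < w ∧ x < distFun μ f w := by
  replace h : x < μ ((fun y => |f y|) ⁻¹' Ioi v) := h
  rw [measure_preimage_Ioi_eq_iSup] at h
  obtain ⟨w, hw⟩ := lt_iSup_iff.1 h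
  obtain ⟨hvw, hxw⟩ := lt_iSup_iff.1 hw
  exact ⟨w, hvw, hxw⟩

lemma rearr_antitone : Antitone (rearr μ f) := fun _ _ h =>
  sInf_le_sInf (image_mono fun _ hs => ⟨hs.1, hs.2.trans (ENNReal.ofReal_le_ofReal h)⟩)

lemma rearr_measurable : Measurable (rearr μ f) :=
  (rearr_antitone μ f).measurable

lemma rearr_le_ofReal {u s : ℝ} (hs : 0 < s) (h : distFun μ f s ≤ ENNReal.ofReal u) :
    rearr μ f u ≤ ENNReal.ofReal s :=
  sInf_le ⟨s, ⟨hs, h⟩, rfl⟩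

lemma distFun_le_ofReal_of_rearr_lt {u v : ℝ} (h : rearr μ f u < ENNReal.ofReal v) :
    distFun μ f v ≤ ENNReal.ofReal u := by
  obtain ⟨_, ⟨s, ⟨-, hsu⟩, rfl⟩, hsv⟩ := sInf_lt_iff.1 h
  exact (distFun_antitone μ f (ENNReal.ofReal_lt_ofReal_iff'.1 hsv).1.le).trans hsu

lemma ofReal_lt_rearr_iff {u v : ℝ} (hv : 0 < v) :
    ENNReal.ofReal v < rearr μ f u ↔ ENNReal.ofReal u < distFun μ f v := by
  refine ⟨fun h => lt_of_not_ge fun hd => (rearr_le_ofReal μ f hv hd).not_gt h, fun h => ?_⟩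
  obtain ⟨w, hvw, hw⟩ := exists_lt_distFun_of_lt μ f h
  calc ENNReal.ofReal v < ENNReal.ofReal w := (ENNReal.ofReal_lt_ofReal_iff (hv.trans hvw)).2 hvw
    _ ≤ rearr μ f u := le_of_not_gt fun hlt => (distFun_le_ofReal_of_rearr_lt μ f hlt).not_gt hw

lemma volume_setOf_ofReal_lt_rearr {v : ℝ} (hv : 0 < v) :
    volume {u | 0 < u ∧ ENNReal.ofReal v < rearr μ f u} = distFun μ f v := by
  have : {u | 0 < u ∧ ENNReal.ofReal v < rearr μ f u} =
      ENNReal.ofReal ⁻¹' Ioo 0 (distFun μ f v) := by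
    ext u
    simp [ofReal_lt_rearr_iff μ f hv, ENNReal.ofReal_pos]
  rw [this, volume_preimage_ofReal_Ioo ENNReal.zero_ne_top, tsub_zero]

/-- Both sides are the area of `{(u, v) ∈ (0, t] × (f*(t), ∞) : v < f*(u)}`, sliced vertically on
the left and horizontally on the right. -/
lemma setLIntegral_rearr_sub_mul_rearr {t : ℝ} (hc : rearr μ f t ≠ ∞) :
    (∫⁻ u in Ioc 0 t, rearr μ f u) - ENNReal.ofReal t * rearr μ f t =
      ∫⁻ v in Ioi (rearr μ f t).toReal, distFun μ f v := by
  set c := rearr μ f t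
  set S : Set (ℝ × ℝ) := {q | ENNReal.ofReal q.2 < rearr μ f q.1}
  have hS : MeasurableSet S := measurableSet_lt (ENNReal.measurable_ofReal.comp measurable_snd)
    ((rearr_measurable μ f).comp measurable_fst)
  have h_vert : (volume.restrict (Ioc 0 t)).prod (volume.restrict (Ioi c.toReal)) S =
      ∫⁻ u in Ioc 0 t, (rearr μ f u - c) := by
    rw [Measure.prod_apply hS]
    refine lintegral_congr fun u => ?_
    rw [Measure.restrict_apply (hS.preimage measurable_prodMk_left),
      ← volume_preimage_ofReal_Ioo hc]
    congr 1
    ext v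
    simp only [mem_inter_iff, mem_preimage, mem_Ioi, mem_Ioo, ENNReal.lt_ofReal_iff_toReal_lt hc]
    exact and_comm
  have h_horiz : (volume.restrict (Ioc 0 t)).prod (volume.restrict (Ioi c.toReal)) S =
      ∫⁻ v in Ioi c.toReal, distFun μ f v := by
    rw [Measure.prod_apply_symm hS]
    refine setLIntegral_congr_fun measurableSet_Ioi fun v hv => ?_
    have hv0 : 0 < v := ENNReal.toReal_nonneg.trans_lt hv
    rw [Measure.restrict_apply (hS.preimage measurable_prodMk_right),
      ← volume_setOf_ofReal_lt_rearr μ f hv0]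
    congr 1
    ext u
    simp only [mem_inter_iff, mem_preimage, mem_Ioc]
    have hcv : c < ENNReal.ofReal v := (ENNReal.lt_ofReal_iff_toReal_lt hc).2 hv
    refine ⟨fun ⟨h, hu, _⟩ => ⟨hu, h⟩, fun ⟨hu, h⟩ => ⟨h, hu, le_of_not_gt fun htu => ?_⟩⟩
    exact (rearr_antitone μ f htu.le).not_gt (hcv.trans h)
  have h_const : ∫⁻ _ in Ioc 0 t, c = ENNReal.ofReal t * c := by
    rw [setLIntegral_const, Real.volume_Ioc, sub_zero, mul_comm]
  have h_le : ∀ᵐ u ∂volume.restrict (Ioc 0 t), c ≤ rearr μ f u :=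
    (ae_restrict_iff' measurableSet_Ioc).2 (ae_of_all _ fun u hu => rearr_antitone μ f hu.2)
  rw [← h_const, ← lintegral_sub measurable_const
    (h_const ▸ ENNReal.mul_ne_top ENNReal.ofReal_ne_top hc) h_le, ← h_vert, h_horiz]

lemma ofReal_rpow_mul_dstar_sub_rearr (q : ℝ) {t : ℝ} (ht : 0 < t) (hc : rearr μ f t ≠ ∞) :
    ENNReal.ofReal t ^ q * (dstar μ f t - rearr μ f t) =
      ENNReal.ofReal t ^ (q - 1) * ∫⁻ v in Ioi (rearr μ f t).toReal, distFun μ f v := by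
  have ht0 : ENNReal.ofReal t ≠ 0 := (ENNReal.ofReal_pos.2 ht).ne'
  have h_div : dstar μ f t - rearr μ f t =
      ((∫⁻ u in Ioc 0 t, rearr μ f u) - ENNReal.ofReal t * rearr μ f t) / ENNReal.ofReal t := by
    rw [ENNReal.sub_div fun _ _ => ht0, mul_comm (ENNReal.ofReal t),
      ENNReal.mul_div_cancel_right ht0 ENNReal.ofReal_ne_top]
    rfl
  rw [h_div, setLIntegral_rearr_sub_mul_rearr μ f hc,
    ENNReal.rpow_sub _ _ ht0 ENNReal.ofReal_ne_top, ENNReal.rpow_one, div_eq_mul_inv,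
    div_eq_mul_inv]
  ring

lemma sharpNorm_le_sharpSharpNorm {p : ℝ} (hp : 1 ≤ p) :
    sharpNorm μ p f ≤ sharpSharpNorm μ p f := by
  have he : 1 / p - 1 ≤ 0 := by
    rw [sub_nonpos, div_le_one (zero_lt_one.trans_le hp)]; exact hp
  refine iSup₂_le fun t ht => ?_
  rcases eq_or_ne (rearr μ f t) ∞ with hc | hc
  · simp [hc]
  rw [ofReal_rpow_mul_dstar_sub_rearr μ f _ ht hc, setLIntegral_Ioi_eq_iSup]
  simp only [ENNReal.mul_iSup]
  refine iSup₂_le fun u hu => ?_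
  have hu0 : 0 < u := ENNReal.toReal_nonneg.trans_lt hu
  have hdist : distFun μ f u ≤ ENNReal.ofReal t :=
    distFun_le_ofReal_of_rearr_lt μ f ((ENNReal.lt_ofReal_iff_toReal_lt hc).2 hu)
  calc ENNReal.ofReal t ^ (1 / p - 1) * ∫⁻ v in Ioi u, distFun μ f v
      ≤ distFun μ f u ^ (-(1 - 1 / p)) * ∫⁻ v in Ioi u, distFun μ f v := by
        rw [neg_sub]; gcongr ?_ * _; exact ENNReal.rpow_le_rpow_of_nonpos hdist he
    _ ≤ sharpSharpNorm μ p f := le_iSup₂_of_le u hu0 le_rfl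

lemma sharpSharpNorm_le_sharpNorm {p : ℝ} (hp : 1 < p) :
    sharpSharpNorm μ p f ≤ sharpNorm μ p f := by
  have he : 1 / p - 1 < 0 := by
    rw [sub_neg, div_lt_one (zero_lt_one.trans hp)]; exact hp
  refine iSup₂_le fun u hu => ?_
  rcases eq_or_ne (distFun μ f u) 0 with h0 | h0
  · have h_zero : ∀ v ∈ Ioi u, distFun μ f v = 0 := fun v hv =>
      nonpos_iff_eq_zero.1 (h0 ▸ distFun_antitone μ f (le_of_lt hv))
    simp [setLIntegral_congr_fun measurableSet_Ioi h_zero]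
  rcases eq_or_ne (distFun μ f u) ∞ with htop | htop
  · rw [htop, neg_sub, ENNReal.top_rpow_of_neg he, zero_mul]
    exact zero_le
  set s := (distFun μ f u).toReal
  have hs : 0 < s := ENNReal.toReal_pos h0 htop
  have hrearr : rearr μ f s ≤ ENNReal.ofReal u :=
    rearr_le_ofReal μ f hu (ENNReal.ofReal_toReal htop).ge
  have hc : rearr μ f s ≠ ∞ := ne_top_of_le_ne_top ENNReal.ofReal_ne_top hrearr
  calc distFun μ f u ^ (-(1 - 1 / p)) * ∫⁻ v in Ioi u, distFun μ f v
      = ENNReal.ofReal s ^ (1 / p - 1) * ∫⁻ v in Ioi u, distFun μ f v := by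
        rw [ENNReal.ofReal_toReal htop, neg_sub]
    _ ≤ ENNReal.ofReal s ^ (1 / p - 1) * ∫⁻ v in Ioi (rearr μ f s).toReal, distFun μ f v := by
        gcongr
        exact ENNReal.toReal_le_of_le_ofReal hu.le hrearr
    _ = ENNReal.ofReal s ^ (1 / p) * (dstar μ f s - rearr μ f s) :=
        (ofReal_rpow_mul_dstar_sub_rearr μ f _ hs hc).symm
    _ ≤ sharpNorm μ p f := le_iSup₂_of_le s hs le_rfl

end Rearrangement

theorem sharpNorm_eq_sharpSharpNorm_general {α : Type*} [MeasurableSpace α] (μ : Measure α)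
    (p : ℝ) (hp : 1 < p) (f : α → ℝ) :
    sharpNorm μ p f = sharpSharpNorm μ p f :=
  le_antisymm (sharpNorm_le_sharpSharpNorm μ f hp.le) (sharpSharpNorm_le_sharpNorm μ f hp)

/-- `‖f‖^#_{L(p,∞)} = ‖f‖^{##}_{L(p,∞)}`, i.e.
`sup_{s>0} s^{1/p}(f**(s) - f*(s)) = sup_{t>0} (λ_f(t))^{-(1-1/p)} ∫_t^∞ λ_f(s) ds`. -/
theorem sharpNorm_eq_sharpSharpNorm {α : Type*} [MeasurableSpace α] (μ : Measure α)
    (p : ℝ) (hp : 1 < p) (f : α → ℝ) (hf : Measurable f) :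
    sharpNorm μ p f = sharpSharpNorm μ p f :=
  sharpNorm_eq_sharpSharpNorm_general μ p hp f
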